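/- arXiv:2103.06663 — 2 statements merged into one kernel-verified Lean document; each statement's English description precedes it below -/
import Mathlib

section
/- If a group G embeds in the topological full group of a full shift Σ^ℤ with linear plook-ahead, then G admits a faithful action by elements of the topological full group of a full shift (with alphabet Σ' = Σ × Σ, say) with linear plook-ahead in which the cocycle of every group element takes only even values. Concretely, if each g acts on Σ^ℤ with cocycle c_g, then the action on (Σ × Σ)^ℤ obtained by applying c_g to the sequence of first coordinates and shifting by 2·c_g is a faithful action by topological full group elements whose cocycles take only even values, and which retains linear plook-ahead. -/
/-- The shift map `σ^n`: `(shiftZ n x) i = x (i + n)`; `shiftZ 1` is the left shift `σ`. -/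
def shiftZ {A : Type*} (n : ℤ) (x : ℤ → A) : ℤ → A := fun i => x (i + n)

/-- An action of a group `G` by elements of the topological full group of the full
shift `A^ℤ`, given together with the continuous cocycles `c g`. -/
structure FullShiftTFGAction (A : Type*) [TopologicalSpace A] (G : Type*) [Group G] where
  f : G → ((ℤ → A) ≃ₜ (ℤ → A))
  c : G → (ℤ → A) → ℤ
  cont : ∀ g, Continuous (c g)
  spec : ∀ g x, f g x = shiftZ (c g x) x
  map_mul : ∀ g h x, f (g * h) x = f g (f h x)

/-- `T` has plook-ahead `α`: for every nontrivial `g` there are `n ≥ 1` and a periodic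
point `x` of period `p ≤ 2n+1` with `|c g x| + α(|c g x|) ≥ n`. -/
def HasPlook {A G : Type*} [TopologicalSpace A] [Group G]
    (T : FullShiftTFGAction A G) (α : ℕ → ℕ) : Prop :=
  ∀ g : G, g ≠ 1 → ∃ (n p : ℕ) (x : ℤ → A), 1 ≤ n ∧ 1 ≤ p ∧ p ≤ 2 * n + 1 ∧
    shiftZ (p : ℤ) x = x ∧ n ≤ (T.c g x).natAbs + α ((T.c g x).natAbs)

/-- `α` is linear: `α n ≤ C n + C` for some constant `C`. -/
def LinearFn (α : ℕ → ℕ) : Prop := ∃ C : ℕ, ∀ n, α n ≤ C * n + C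

/-! The action is pulled back along the map `(A × A)^ℤ → A^ℤ` reading the first coordinates at
even positions: it intertwines `σ^(2k)` on `(A × A)^ℤ` with `σ^k` on `A^ℤ`, so doubling the cocycles
gives again a cocycle. The two things that need an argument are that the cocycle identity
`c (g h) = c h + c g ∘ f h` holds on the nose and not only up to a period of the point, and that
the doubled action is faithful. Both follow from the rigidity of continuous cocycles: a
continuous `D : B^ℤ → ℤ` such that `D v` is a period of `v` for every `v` vanishes, because it is
constant on a cylinder around `v`, and that cylinder contains a point which is constantly `b₁`
far to the right and constantly `b₂ ≠ b₁` far to the left. The plook-ahead witnesses are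
stretched to `(A × A)^ℤ` by doubling every letter, which doubles periods and cocycle values. -/

open Function

section Shift

variable {A : Type*}

@[simp]
lemma shiftZ_apply (n : ℤ) (x : ℤ → A) (i : ℤ) : shiftZ n x i = x (i + n) := rfl

lemma shiftZ_zero (x : ℤ → A) : shiftZ 0 x = x :=
  funext fun i => by simp

lemma shiftZ_shiftZ (k l : ℤ) (x : ℤ → A) : shiftZ k (shiftZ l x) = shiftZ (k + l) x :=
  funext fun i => by simp [add_assoc]

lemma shiftZ_eq_shiftZ_iff {a b : ℤ} {x : ℤ → A} :
    shiftZ a x = shiftZ b x ↔ Periodic x (a - b) := by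
  constructor
  · intro h i
    have := congrFun h (i - b)
    rw [shiftZ_apply, shiftZ_apply, sub_add_cancel] at this
    rwa [show i + (a - b) = i - b + a by ring]
  · intro h
    funext i
    have := h (i + b)
    rwa [show i + b + (a - b) = i + a by ring] at this

lemma continuous_shiftZ [TopologicalSpace A] (n : ℤ) :
    Continuous (shiftZ n : (ℤ → A) → ℤ → A) :=
  continuous_pi fun i => continuous_apply (i + n)

lemma Continuous.shiftZ_self [TopologicalSpace A] {c : (ℤ → A) → ℤ} (hc : Continuous c) :
    Continuous fun x => shiftZ (c x) x := by
  have : Continuous fun p : ℤ × (ℤ → A) => shiftZ p.1 p.2 :=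
    continuous_prod_of_discrete_left.mpr continuous_shiftZ
  exact this.comp (hc.prodMk continuous_id)

end Shift

section Rigidity

variable {B : Type*}

lemma Function.Periodic.eq_zero_of_ends_ne {w : ℤ → B} {d : ℤ} (hw : Periodic w d)
    {b₁ b₂ : B} (hb : b₁ ≠ b₂) (M : ℕ) (h₁ : ∀ j : ℤ, M < j → w j = b₁)
    (h₂ : ∀ j : ℤ, j < -M → w j = b₂) : d = 0 := by
  by_contra hd
  have hsq : 1 ≤ d * d := by nlinarith [mul_self_pos.mpr hd]
  have key := hw.int_mul (-(2 * M + 2) * d) (M + 1)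
  rw [Int.cast_id, h₂ _ (by nlinarith), h₁ _ (by omega)] at key
  exact hb key.symm

lemma eq_zero_of_forall_periodic [TopologicalSpace B] [Nontrivial B] {D : (ℤ → B) → ℤ}
    (hD : Continuous D) (h : ∀ v, Periodic v (D v)) : D = 0 := by
  classical
  funext v
  obtain ⟨b₁, b₂, hb⟩ := exists_pair_ne B
  obtain ⟨I, U, hU, hsub⟩ := isOpen_pi_iff.mp ((isOpen_discrete {D v}).preimage hD) v rfl
  set w : ℤ → B := fun j => if j ∈ I then v j else if 0 ≤ j then b₁ else b₂
  have hDw : D w = D v := hsub fun j hj => by simpa [w, Finset.mem_coe.mp hj] using (hU j hj).2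
  have hfar : ∀ j, I.sup Int.natAbs < j.natAbs → j ∉ I := fun j hj hjI =>
    (Finset.le_sup (f := Int.natAbs) hjI).not_gt hj
  refine (hDw ▸ h w).eq_zero_of_ends_ne hb (I.sup Int.natAbs) (fun j hj => ?_) (fun j hj => ?_)
  · simp [w, hfar j (by omega), show 0 ≤ j by omega]
  · simp [w, hfar j (by omega), show ¬0 ≤ j by omega]

lemma eq_of_forall_shiftZ_eq [TopologicalSpace B] [Nontrivial B] {c c' : (ℤ → B) → ℤ}
    (hc : Continuous c) (hc' : Continuous c') (h : ∀ x, shiftZ (c x) x = shiftZ (c' x) x) :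
    c = c' := by
  have := eq_zero_of_forall_periodic (hc.sub hc') fun x => shiftZ_eq_shiftZ_iff.mp (h x)
  exact funext fun x => sub_eq_zero.mp (congrFun this x)

end Rigidity

namespace FullShiftTFGAction

variable {A G : Type*} [Group G]

section Cocycle

variable [TopologicalSpace A] (T : FullShiftTFGAction A G)

lemma f_one_apply (x : ℤ → A) : T.f 1 x = x :=
  (T.f 1).injective (by rw [← T.map_mul, mul_one])

variable [Nontrivial A]

lemma c_one_apply (x : ℤ → A) : T.c 1 x = 0 :=
  congrFun (eq_of_forall_shiftZ_eq (T.cont 1) continuous_const fun x => by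
    rw [← T.spec, f_one_apply, shiftZ_zero]) x

lemma c_mul_apply (g h : G) (x : ℤ → A) : T.c (g * h) x = T.c h x + T.c g (T.f h x) := by
  refine congrFun (eq_of_forall_shiftZ_eq (c' := fun x => T.c h x + T.c g (T.f h x))
    (T.cont (g * h)) ((T.cont h).add ((T.cont g).comp (T.f h).continuous)) fun x => ?_) x
  rw [← T.spec, T.map_mul, T.spec g, T.spec h, shiftZ_shiftZ, add_comm]

lemma f_eq_f_iff {g g' : G} : T.f g = T.f g' ↔ T.c g = T.c g' := by
  constructor
  · intro h
    exact eq_of_forall_shiftZ_eq (T.cont g) (T.cont g') fun x => by rw [← T.spec, ← T.spec, h]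
  · intro h
    ext x : 1
    rw [T.spec, T.spec, h]

end Cocycle

section OfCocycle

variable {c : G → (ℤ → A) → ℤ}

lemma shiftZ_shiftZ_of_cocycle
    (mul : ∀ g h x, c (g * h) x = c h x + c g (shiftZ (c h x) x)) (g h : G) (x : ℤ → A) :
    shiftZ (c g (shiftZ (c h x) x)) (shiftZ (c h x) x) = shiftZ (c (g * h) x) x := by
  rw [shiftZ_shiftZ, mul, add_comm]

variable [TopologicalSpace A]

def ofCocycle (c : G → (ℤ → A) → ℤ) (cont : ∀ g, Continuous (c g)) (one : ∀ x, c 1 x = 0)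
    (mul : ∀ g h x, c (g * h) x = c h x + c g (shiftZ (c h x) x)) :
    FullShiftTFGAction A G where
  f g :=
    { toFun x := shiftZ (c g x) x
      invFun x := shiftZ (c g⁻¹ x) x
      left_inv x := by
        simp only
        rw [shiftZ_shiftZ_of_cocycle mul, inv_mul_cancel, one, shiftZ_zero]
      right_inv x := by
        simp only
        rw [shiftZ_shiftZ_of_cocycle mul, mul_inv_cancel, one, shiftZ_zero]
      continuous_toFun := (cont g).shiftZ_self
      continuous_invFun := (cont g⁻¹).shiftZ_self }
  c := c
  cont := cont
  spec _ _ := rfl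
  map_mul g h x := (shiftZ_shiftZ_of_cocycle mul g h x).symm

end OfCocycle

end FullShiftTFGAction

section Doubling

variable {A : Type*}

def evenFst (x : ℤ → A × A) : ℤ → A := fun i => (x (2 * i)).1

lemma evenFst_shiftZ_two_mul (k : ℤ) (x : ℤ → A × A) :
    evenFst (shiftZ (2 * k) x) = shiftZ k (evenFst x) :=
  funext fun i => by simp [evenFst, mul_add]

lemma continuous_evenFst [TopologicalSpace A] : Continuous (evenFst : (ℤ → A × A) → ℤ → A) :=
  continuous_pi fun i => (continuous_apply (2 * i)).fst

def stretch (u : ℤ → A) : ℤ → A × A := fun j => (u (j / 2), u (j / 2))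

lemma evenFst_stretch (u : ℤ → A) : evenFst (stretch u) = u :=
  funext fun i => by simp [evenFst, stretch]

lemma shiftZ_two_mul_stretch (k : ℤ) (u : ℤ → A) :
    shiftZ (2 * k) (stretch u) = stretch (shiftZ k u) :=
  funext fun j => by simp [stretch, show (j + 2 * k) / 2 = j / 2 + k by omega]

end Doubling

namespace FullShiftTFGAction

variable {A G : Type*} [TopologicalSpace A] [Nontrivial A] [Group G]
  (T : FullShiftTFGAction A G)

def double : FullShiftTFGAction (A × A) G :=
  ofCocycle (fun g x => 2 * T.c g (evenFst x))
    (fun g => continuous_const.mul ((T.cont g).comp continuous_evenFst))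
    (fun x => by simp [c_one_apply])
    (fun g h x => by rw [evenFst_shiftZ_two_mul, ← T.spec, c_mul_apply, mul_add])

@[simp]
lemma double_c (g : G) (x : ℤ → A × A) : T.double.c g x = 2 * T.c g (evenFst x) := rfl

lemma double_f_injective (hT : Injective T.f) : Injective T.double.f := by
  intro g g' h
  rw [f_eq_f_iff] at h
  refine hT ((T.f_eq_f_iff).mpr (funext fun u => ?_))
  simpa [evenFst_stretch] using congrFun h (stretch u)

end FullShiftTFGAction

-- `plookDouble α (2 m) = 2 α m + 1` pays for the plook-ahead witness `n ↦ 2 n + 1`.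
def plookDouble (α : ℕ → ℕ) (k : ℕ) : ℕ := if k = 0 then 0 else 2 * α (k / 2) + 1

lemma LinearFn.plookDouble {α : ℕ → ℕ} (hα : LinearFn α) : LinearFn (plookDouble α) := by
  obtain ⟨C, hC⟩ := hα
  refine ⟨2 * C + 1, fun k => ?_⟩
  unfold _root_.plookDouble
  split_ifs
  · omega
  · have hhalf := hC (k / 2)
    have hmono : C * (k / 2) * 2 ≤ C * k := by
      rw [mul_assoc]
      exact Nat.mul_le_mul_left C (Nat.div_mul_le_self k 2)
    nlinarith

lemma HasPlook.double {A G : Type*} [TopologicalSpace A] [Nontrivial A] [Group G]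
    {T : FullShiftTFGAction A G} {α : ℕ → ℕ} (hα0 : α 0 = 0) (hT : HasPlook T α) :
    HasPlook T.double (plookDouble α) := by
  intro g hg
  obtain ⟨n, p, u, hn, hp, hpn, hper, hbound⟩ := hT g hg
  have hm : (T.c g u).natAbs ≠ 0 := fun h0 => by rw [h0, hα0] at hbound; omega
  refine ⟨2 * n + 1, 2 * p, stretch u, by omega, by omega, by omega, ?_, ?_⟩
  · rw [Nat.cast_mul, Nat.cast_two, shiftZ_two_mul_stretch, hper]
  · rw [T.double_c, evenFst_stretch, plookDouble, if_neg (by omega)]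
    have : (2 * T.c g u).natAbs / 2 = (T.c g u).natAbs := by omega
    rw [this]
    omega

theorem even_cocycle_action_general {A G : Type*} [Fintype A] [TopologicalSpace A]
    [Group G] (hcard : 2 ≤ Fintype.card A)
    (T : FullShiftTFGAction A G) (hfaith : Function.Injective T.f)
    (α : ℕ → ℕ) (hα0 : α 0 = 0) (hαlin : LinearFn α) (hplook : HasPlook T α) :
    ∃ (T' : FullShiftTFGAction (A × A) G) (β : ℕ → ℕ),
      Function.Injective T'.f ∧ β 0 = 0 ∧ LinearFn β ∧ HasPlook T' β ∧
      ∀ g x, Even (T'.c g x) := by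
  have : Nontrivial A := Fintype.one_lt_card_iff_nontrivial.mp hcard
  exact ⟨T.double, plookDouble α, T.double_f_injective hfaith, if_pos rfl, hαlin.plookDouble,
    hplook.double hα0, fun g x => by simp⟩

/-- If `G` embeds in the topological full group of a full shift `A^ℤ` with linear
plook-ahead, then `G` admits a faithful action by topological full group elements of
the full shift `(A × A)^ℤ`, still with linear plook-ahead, in which the cocycle of
every group element takes only even values. -/
theorem even_cocycle_action {A G : Type*} [Fintype A] [TopologicalSpace A]
    [DiscreteTopology A] [Group G] (hcard : 2 ≤ Fintype.card A)
    (T : FullShiftTFGAction A G) (hfaith : Function.Injective T.f)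
    (α : ℕ → ℕ) (hα0 : α 0 = 0) (hαlin : LinearFn α) (hplook : HasPlook T α) :
    ∃ (T' : FullShiftTFGAction (A × A) G) (β : ℕ → ℕ),
      Function.Injective T'.f ∧ β 0 = 0 ∧ LinearFn β ∧ HasPlook T' β ∧
      ∀ g x, Even (T'.c g x) :=
  even_cocycle_action_general hcard T hfaith α hα0 hαlin hplook
end

section
/- Every finite group admits an embedding into the topological full group of the binary full shift {0,1}^ℤ whose action has unique moves. -/
/-- Self-homeomorphisms of a space form a group under composition. -/
instance homeoGroup (X : Type*) [TopologicalSpace X] : Group (X ≃ₜ X) where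
  mul f g := g.trans f
  one := Homeomorph.refl X
  inv := Homeomorph.symm
  mul_assoc f g h := Homeomorph.ext fun _ => rfl
  one_mul f := Homeomorph.ext fun _ => rfl
  mul_one f := Homeomorph.ext fun _ => rfl
  inv_mul_cancel f := Homeomorph.ext fun x => f.symm_apply_apply x

namespace UniqueMoves

lemma shiftZ_zero {A : Type*} (x : ℤ → A) : shiftZ 0 x = x :=
  funext fun i => by simp [shiftZ]

lemma shiftZ_shiftZ {A : Type*} (a b : ℤ) (x : ℤ → A) :
    shiftZ a (shiftZ b x) = shiftZ (a + b) x :=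
  funext fun i => by simp only [shiftZ]; ring_nf

/-- `u = 1 0^m` occurs at position `j` in `x`. -/
def occ (m : ℕ) (x : ℤ → Bool) (j : ℤ) : Prop :=
  x j = true ∧ ∀ i : Fin m, x (j + 1 + (i : ℤ)) = false

instance (m : ℕ) (x : ℤ → Bool) (j : ℤ) : Decidable (occ m x j) := by
  unfold occ; infer_instance

lemma occ_shiftZ (m : ℕ) (n : ℤ) (x : ℤ → Bool) (j : ℤ) :
    occ m (shiftZ n x) j ↔ occ m x (j + n) := by
  unfold occ shiftZ
  constructor
  · rintro ⟨h1, h2⟩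
    refine ⟨h1, fun i => ?_⟩
    have := h2 i
    rwa [show j + 1 + (i : ℤ) + n = j + n + 1 + (i : ℤ) by ring] at this
  · rintro ⟨h1, h2⟩
    refine ⟨h1, fun i => ?_⟩
    have := h2 i
    rwa [show j + n + 1 + (i : ℤ) = j + 1 + (i : ℤ) + n by ring] at this

lemma occ_apart (m : ℕ) (x : ℤ → Bool) {j k : ℤ} (hj : occ m x j) (hk : occ m x k)
    (hlt : j < k) (hle : k ≤ j + m) : False := by
  have h0 : 0 ≤ k - j - 1 := by omega
  have h1 : (k - j - 1).toNat < m := by omega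
  have h2 := hj.2 ⟨(k - j - 1).toNat, h1⟩
  have h3 : j + 1 + (((k - j - 1).toNat : ℕ) : ℤ) = k := by
    rw [Int.toNat_of_nonneg h0]; ring
  rw [h3] at h2
  rw [hk.1] at h2
  exact Bool.noConfusion h2

lemma occ_eq (m : ℕ) (x : ℤ → Bool) {j k : ℤ} (hj : occ m x j) (hk : occ m x k)
    (h1 : j - m ≤ k) (h2 : k ≤ j + m) : j = k := by
  rcases lt_trichotomy j k with h | h | h
  · exact absurd (occ_apart m x hj hk h h2) (by simp)
  · exact h
  · exact absurd (occ_apart m x hk hj h (by omega)) (by simp)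

variable {G : Type*} [Group G] [Fintype G]

noncomputable def cay (G : Type*) [Group G] [Fintype G] : G ≃ Fin (Fintype.card G) :=
  Fintype.equivFin G

noncomputable def pim (g : G) (j : Fin (Fintype.card G)) : Fin (Fintype.card G) :=
  cay G (g * (cay G).symm j)

lemma pim_pim (g h : G) (j : Fin (Fintype.card G)) : pim g (pim h j) = pim (g * h) j := by
  unfold pim
  rw [Equiv.symm_apply_apply, mul_assoc]

lemma pim_one (j : Fin (Fintype.card G)) : pim (1 : G) j = j := by
  unfold pim; rw [one_mul, Equiv.apply_symm_apply]

lemma pim_injective (j : Fin (Fintype.card G)) : Function.Injective (fun g : G => pim g j) := by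
  intro a b hab
  have := (cay G).injective hab
  exact mul_right_cancel this

/-- The cocycle. -/
noncomputable def coc (g : G) (x : ℤ → Bool) : ℤ :=
  ∑ j : Fin (Fintype.card G),
    if occ (Fintype.card G) x (j : ℤ) then ((j : ℤ) - ((pim g j : Fin _) : ℤ)) else 0

lemma coc_of_not (g : G) {x : ℤ → Bool}
    (h : ∀ j : Fin (Fintype.card G), ¬ occ (Fintype.card G) x (j : ℤ)) : coc g x = 0 :=
  Finset.sum_eq_zero fun j _ => if_neg (h j)

lemma coc_of_occ (g : G) {x : ℤ → Bool} (j0 : Fin (Fintype.card G))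
    (h : occ (Fintype.card G) x (j0 : ℤ)) :
    coc g x = (j0 : ℤ) - ((pim g j0 : Fin _) : ℤ) := by
  unfold coc
  rw [Finset.sum_eq_single_of_mem j0 (Finset.mem_univ _)]
  · rw [if_pos h]
  · intro j _ hne
    rw [if_neg]
    intro hc
    have hj0 : (j0 : ℤ) < Fintype.card G := by exact_mod_cast j0.isLt
    have hj : (j : ℤ) < Fintype.card G := by exact_mod_cast j.isLt
    have h1 : (j0 : ℤ) - Fintype.card G ≤ (j : ℤ) := by
      have : (0 : ℤ) ≤ (j : ℤ) := by positivity
      omega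
    have h2 : (j : ℤ) ≤ (j0 : ℤ) + Fintype.card G := by omega
    have := occ_eq (Fintype.card G) x h hc h1 h2
    apply hne
    apply Fin.ext
    exact_mod_cast this.symm

lemma occ_shift_iff {x : ℤ → Bool} (j0 : Fin (Fintype.card G))
    (h : occ (Fintype.card G) x (j0 : ℤ)) (p j : Fin (Fintype.card G)) :
    occ (Fintype.card G) (shiftZ ((j0 : ℤ) - (p : ℤ)) x) (j : ℤ) ↔ j = p := by
  rw [occ_shiftZ]
  constructor
  · intro hq
    have hj0 : (j0 : ℤ) < Fintype.card G := by exact_mod_cast j0.isLt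
    have hj : (j : ℤ) < Fintype.card G := by exact_mod_cast j.isLt
    have hp : (p : ℤ) < Fintype.card G := by exact_mod_cast p.isLt
    have hj' : (0 : ℤ) ≤ (j : ℤ) := by positivity
    have hp' : (0 : ℤ) ≤ (p : ℤ) := by positivity
    have h1 : (j0 : ℤ) - Fintype.card G ≤ (j : ℤ) + ((j0 : ℤ) - (p : ℤ)) := by omega
    have h2 : (j : ℤ) + ((j0 : ℤ) - (p : ℤ)) ≤ (j0 : ℤ) + Fintype.card G := by omega
    have := occ_eq (Fintype.card G) x h hq h1 h2
    apply Fin.ext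
    have : (j : ℤ) = (p : ℤ) := by omega
    exact_mod_cast this
  · rintro rfl
    rwa [show (j : ℤ) + ((j0 : ℤ) - (j : ℤ)) = (j0 : ℤ) by ring]

lemma coc_one (x : ℤ → Bool) : coc (1 : G) x = 0 := by
  unfold coc
  apply Finset.sum_eq_zero
  intro j _
  rw [pim_one, sub_self, ite_self]

lemma coc_mul (g h : G) (x : ℤ → Bool) :
    coc (g * h) x = coc g (shiftZ (coc h x) x) + coc h x := by
  by_cases hx : ∃ j0 : Fin (Fintype.card G), occ (Fintype.card G) x (j0 : ℤ)
  · obtain ⟨j0, hj0⟩ := hx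
    have e1 : coc h x = (j0 : ℤ) - ((pim h j0 : Fin _) : ℤ) := coc_of_occ h j0 hj0
    have h2 : occ (Fintype.card G) (shiftZ ((j0 : ℤ) - ((pim h j0 : Fin _) : ℤ)) x)
        ((pim h j0 : Fin _) : ℤ) := (occ_shift_iff j0 hj0 (pim h j0) (pim h j0)).mpr rfl
    rw [e1, coc_of_occ g (pim h j0) h2, coc_of_occ (g * h) j0 hj0, pim_pim]
    ring
  · push_neg at hx
    rw [coc_of_not h hx, shiftZ_zero, coc_of_not g hx, coc_of_not (g * h) hx]
    ring

/-- The action map. -/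
noncomputable def fg (g : G) (x : ℤ → Bool) : ℤ → Bool := shiftZ (coc g x) x

lemma fg_one (x : ℤ → Bool) : fg (1 : G) x = x := by
  unfold fg; rw [coc_one, shiftZ_zero]

lemma fg_mul (g h : G) (x : ℤ → Bool) : fg (g * h) x = fg g (fg h x) := by
  unfold fg
  rw [shiftZ_shiftZ, coc_mul]

lemma isLocallyConstant_of_finWindow {α : Type*} (f : (ℤ → Bool) → α)
    (H : ∀ x, ∃ S : Finset ℤ, ∀ y, (∀ i ∈ S, y i = x i) → f y = f x) :
    IsLocallyConstant f := by
  rw [IsLocallyConstant.iff_exists_open]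
  intro x
  obtain ⟨S, hS⟩ := H x
  refine ⟨{y | ∀ i ∈ S, y i = x i}, ?_, fun i _ => rfl, hS⟩
  have heq : {y : ℤ → Bool | ∀ i ∈ S, y i = x i} = ⋂ i ∈ S, {y | y i = x i} := by
    ext y; simp
  rw [heq]
  apply isOpen_biInter_finset
  intro i _
  show IsOpen ((fun y : ℤ → Bool => y i) ⁻¹' {x i})
  exact (continuous_apply i).isOpen_preimage _ (isOpen_discrete _)

lemma occ_congr {x y : ℤ → Bool} (m : ℕ)
    (hy : ∀ i ∈ Finset.Icc (0 : ℤ) (2 * m), y i = x i) (j : Fin m) :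
    occ m y (j : ℤ) ↔ occ m x (j : ℤ) := by
  have hj : (j : ℤ) < m := by exact_mod_cast j.isLt
  have hj' : (0 : ℤ) ≤ (j : ℤ) := by positivity
  unfold occ
  constructor
  · rintro ⟨h1, h2⟩
    refine ⟨?_, fun i => ?_⟩
    · rw [← hy _ (by rw [Finset.mem_Icc]; omega)]; exact h1
    · have hi : ((i : ℕ) : ℤ) < m := by exact_mod_cast i.isLt
      have hi' : (0 : ℤ) ≤ ((i : ℕ) : ℤ) := by positivity
      rw [← hy _ (by rw [Finset.mem_Icc]; omega)]; exact h2 i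
  · rintro ⟨h1, h2⟩
    refine ⟨?_, fun i => ?_⟩
    · rw [hy _ (by rw [Finset.mem_Icc]; omega)]; exact h1
    · have hi : ((i : ℕ) : ℤ) < m := by exact_mod_cast i.isLt
      have hi' : (0 : ℤ) ≤ ((i : ℕ) : ℤ) := by positivity
      rw [hy _ (by rw [Finset.mem_Icc]; omega)]; exact h2 i

lemma coc_congr (g : G) {x y : ℤ → Bool}
    (hy : ∀ i ∈ Finset.Icc (0 : ℤ) (2 * Fintype.card G), y i = x i) :
    coc g y = coc g x := by
  unfold coc
  apply Finset.sum_congr rfl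
  intro j _
  rw [if_congr (occ_congr (Fintype.card G) hy j) rfl rfl]

lemma coc_continuous (g : G) : Continuous (coc g) := by
  apply IsLocallyConstant.continuous
  apply isLocallyConstant_of_finWindow
  intro x
  exact ⟨Finset.Icc (0 : ℤ) (2 * Fintype.card G), fun y hy => coc_congr g hy⟩

lemma fg_continuous (g : G) : Continuous (fg g) := by
  apply continuous_pi
  intro i
  have hrw : (fun x : ℤ → Bool => fg g x i) = fun x => x (i + coc g x) := rfl
  rw [hrw]
  apply IsLocallyConstant.continuous
  apply isLocallyConstant_of_finWindow
  intro x
  refine ⟨insert (i + coc g x) (Finset.Icc (0 : ℤ) (2 * Fintype.card G)), fun y hy => ?_⟩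
  have h1 : coc g y = coc g x := coc_congr g (fun k hk => hy k (Finset.mem_insert_of_mem hk))
  rw [h1]
  exact hy _ (Finset.mem_insert_self _ _)

noncomputable def fh (g : G) : (ℤ → Bool) ≃ₜ (ℤ → Bool) where
  toFun := fg g
  invFun := fg g⁻¹
  left_inv x := by rw [← fg_mul, inv_mul_cancel, fg_one]
  right_inv x := by rw [← fg_mul, mul_inv_cancel, fg_one]
  continuous_toFun := fg_continuous g
  continuous_invFun := fg_continuous g⁻¹

noncomputable def phi (G : Type*) [Group G] [Fintype G] :
    G →* ((ℤ → Bool) ≃ₜ (ℤ → Bool)) where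
  toFun := fh
  map_one' := Homeomorph.ext fun x => fg_one x
  map_mul' g h := Homeomorph.ext fun x => fg_mul g h x

/-- The marker point: true exactly at position 0. -/
def x0 : ℤ → Bool := fun i => decide (i = 0)

lemma occ_x0 (m : ℕ) : occ m x0 0 := by
  refine ⟨by simp [x0], fun i => ?_⟩
  have hi' : (0 : ℤ) ≤ ((i : ℕ) : ℤ) := by positivity
  simp only [x0, decide_eq_false_iff_not]
  omega

noncomputable def j0 (G : Type*) [Group G] [Fintype G] : Fin (Fintype.card G) :=
  ⟨0, Fintype.card_pos⟩

lemma coc_x0 (g : G) : coc g x0 = 0 - ((pim g (j0 G) : Fin _) : ℤ) := by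
  have h : occ (Fintype.card G) x0 ((j0 G : Fin _) : ℤ) := by
    have : ((j0 G : Fin _) : ℤ) = 0 := by simp [j0]
    rw [this]; exact occ_x0 _
  rw [coc_of_occ g (j0 G) h]
  simp [j0]

end UniqueMoves

open UniqueMoves in
/-- Every finite group admits an embedding into the topological full group of the
binary full shift `{0,1}^ℤ` whose action has unique moves. -/
theorem finite_group_embeds_unique_moves (G : Type*) [Group G] [Fintype G] :
    ∃ (φ : G →* ((ℤ → Bool) ≃ₜ (ℤ → Bool))) (c : G → (ℤ → Bool) → ℤ),
      Function.Injective φ ∧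
      (∀ g, Continuous (c g)) ∧
      (∀ g x, φ g x = shiftZ (c g x) x) ∧
      (∀ F : Finset G, F.Nonempty → ∃ g ∈ F, ∃ x : ℤ → Bool,
        ∀ h : G, h ≠ g → c h x ≠ c g x) := by
  refine ⟨phi G, coc, ?_, coc_continuous, fun g x => rfl, ?_⟩
  · rw [injective_iff_map_eq_one]
    intro a ha
    by_contra hne
    have h1 : fg a x0 = x0 := by
      have := congrArg (fun e : (ℤ → Bool) ≃ₜ (ℤ → Bool) => e x0) ha
      exact this
    have h2 : coc a x0 = 0 - ((pim a (j0 G) : Fin _) : ℤ) := coc_x0 a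
    have h3 : pim a (j0 G) ≠ j0 G := by
      intro hc
      apply hne
      have : pim a (j0 G) = pim 1 (j0 G) := by rw [pim_one]; exact hc
      exact pim_injective (j0 G) this
    have h4 : ((pim a (j0 G) : Fin _) : ℤ) ≠ 0 := by
      intro hc
      apply h3
      apply Fin.ext
      have hval : (pim a (j0 G)).val = 0 := by exact_mod_cast hc
      exact hval.trans rfl
    have h5 : coc a x0 = 0 := by
      have h5' : x0 (0 + coc a x0) = x0 0 := congrFun h1 0
      simp only [x0] at h5'
      rw [decide_eq_decide] at h5'
      have h5'' : 0 + coc a x0 = 0 := h5'.mpr trivial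
      omega
    rw [h5] at h2
    omega
  · intro F hF
    obtain ⟨g, hg⟩ := hF
    refine ⟨g, hg, x0, ?_⟩
    intro h hne hc
    rw [coc_x0, coc_x0] at hc
    have : ((pim h (j0 G) : Fin _) : ℤ) = ((pim g (j0 G) : Fin _) : ℤ) := by omega
    have heq : pim h (j0 G) = pim g (j0 G) := Fin.ext (by exact_mod_cast this)
    exact hne (pim_injective (j0 G) heq)
end
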